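/- Let R be a principal ideal domain, V a free R-module of rank n, and W a nonzero R-submodule of V generated by elements w_1,...,w_m. Suppose that for every prime p of R, the subspace of the (R/pR)-vector space V/pV spanned by the images of w_1,...,w_m has dimension equal to the dimension over Frac(R) of the Frac(R)-span of W in V ⊗ Frac(R). Then W is a direct summand of V. -/

import Mathlib

/-!
Put `W` in Smith normal form: there are a basis `e` of `V` and nonzero `a₁, …, a_r ∈ R` such that
`a₁ e₁, …, a_r e_r` is a basis of `W`. Over `Frac(R)` the images of the `wᵢ` then span a space of
dimension `r`, while over `R/pR` they span the space with basis the `eᵢ` with `p ∤ aᵢ`. Equality of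
the two dimensions for every prime `p` forces every `aᵢ` to be a unit, so `W` is spanned by part of
the basis `e` and the remaining basis vectors span a complement.
-/

open TensorProduct Module Submodule Set

lemma Submodule.span_range_smul_of_isUnit {R M ι : Type*} [CommSemiring R] [AddCommMonoid M]
    [Module R M] {v : ι → M} {a : ι → R} (ha : ∀ i, IsUnit (a i)) :
    span R (range fun i => a i • v i) = span R (range v) := by
  refine le_antisymm (span_le.2 <| range_subset_iff.2 fun i => ?_)
    (span_le.2 <| range_subset_iff.2 fun i => ?_)
  · exact smul_mem _ _ (subset_span ⟨i, rfl⟩)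
  · exact (smul_mem_iff_of_isUnit _ (ha i)).1 (subset_span ⟨i, rfl⟩)

lemma Submodule.span_range_one_tmul {R M A ι : Type*} [CommSemiring R] [AddCommMonoid M]
    [Module R M] [CommSemiring A] [Algebra R A] (w : ι → M) :
    span A (range fun i => (1 : A) ⊗ₜ[R] w i) = (span R (range w)).baseChange A := by
  rw [baseChange_span, ← range_comp]
  rfl

lemma LinearIndependent.smul_iff_forall_ne_zero {L M ι : Type*} [Field L] [AddCommGroup M]
    [Module L M] {e : ι → M} (he : LinearIndependent L e) (c : ι → L) :
    LinearIndependent L (fun i => c i • e i) ↔ ∀ i, c i ≠ 0 := by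
  refine ⟨fun h i hci => h.ne_zero i (by simp [hci]), fun hc => ?_⟩
  exact he.units_smul fun i => Units.mk0 (c i) (hc i)

namespace Module.Basis.SmithNormalForm

variable {R M ι : Type*} [CommRing R] [AddCommGroup M] [Module R M] {N : Submodule R M} {n : ℕ}
  (snf : Basis.SmithNormalForm N ι n)

lemma span_range_smul_eq : span R (range fun i => snf.a i • snf.bM (snf.f i)) = N := by
  conv_rhs => rw [← N.map_subtype_top, ← snf.bN.span_eq, map_span, ← range_comp]
  exact congrArg _ (congrArg range (funext fun i => (snf.snf i).symm))

lemma a_ne_zero [Nontrivial R] (i : Fin n) : snf.a i ≠ 0 := fun h =>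
  snf.bN.ne_zero i (Subtype.ext (by simp [snf.snf, h]))

lemma baseChange_eq_span (A : Type*) [CommSemiring A] [Algebra R A] :
    N.baseChange A =
      span A (range fun i => algebraMap R A (snf.a i) • snf.bM.baseChange A (snf.f i)) := by
  calc N.baseChange A = (span R (range fun i => snf.a i • snf.bM (snf.f i))).baseChange A := by
        rw [snf.span_range_smul_eq]
    _ = _ := by
        rw [baseChange_span, ← range_comp]
        congr 2
        funext i
        simp [Basis.baseChange_apply, algebraMap_smul]

lemma finrank_baseChange_eq_iff (L : Type*) [Field L] [Algebra R L] :
    finrank L (N.baseChange L) = n ↔ ∀ i, algebraMap R L (snf.a i) ≠ 0 := by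
  rw [snf.baseChange_eq_span, ← ((snf.bM.baseChange L).linearIndependent.comp snf.f
    snf.f.injective).smul_iff_forall_ne_zero, linearIndependent_iff_card_eq_finrank_span,
    Set.finrank, Fintype.card_fin, eq_comm]
  rfl

lemma exists_isCompl_of_isUnit (h : ∀ i, IsUnit (snf.a i)) : ∃ U : Submodule R M, IsCompl N U := by
  have hN : N = span R (snf.bM '' range snf.f) := by
    rw [← range_comp, ← span_range_smul_of_isUnit h]
    exact snf.span_range_smul_eq.symm
  rw [hN]
  exact ⟨_, snf.bM.linearIndependent.isCompl_span_image snf.bM.span_eq isCompl_compl⟩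

end Module.Basis.SmithNormalForm

theorem stmt0_general {R : Type*} [CommRing R] [IsDomain R] [IsPrincipalIdealRing R]
    {V : Type*} [AddCommGroup V] [Module R V] [Module.Free R V] [Module.Finite R V]
    {m : ℕ} (w : Fin m → V)
    (W : Submodule R V) (hWspan : W = Submodule.span R (Set.range w))
    (hdim : ∀ p : R, Prime p →
      Module.finrank (R ⧸ Ideal.span {p})
        (Submodule.span (R ⧸ Ideal.span {p})
          (Set.range fun i => ((1 : R ⧸ Ideal.span {p}) ⊗ₜ[R] w i :
            (R ⧸ Ideal.span {p}) ⊗[R] V)))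
      = Module.finrank (FractionRing R)
        (Submodule.span (FractionRing R)
          (Set.range fun i => ((1 : FractionRing R) ⊗ₜ[R] w i :
            (FractionRing R) ⊗[R] V)))) :
    ∃ U : Submodule R V, IsCompl W U := by
  obtain ⟨r, snf⟩ := W.smithNormalForm (Free.chooseBasis R V)
  have hK : finrank (FractionRing R) (W.baseChange (FractionRing R)) = r :=
    (snf.finrank_baseChange_eq_iff _).2 fun i =>
      (map_ne_zero_iff _ (IsFractionRing.injective R _)).2 (snf.a_ne_zero i)
  refine snf.exists_isCompl_of_isUnit fun i => ?_
  by_contra hunit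
  obtain ⟨p, hp, hpa⟩ := WfDvdMonoid.exists_irreducible_factor hunit (snf.a_ne_zero i)
  have := PrincipalIdealRing.isMaximal_of_irreducible hp
  let := Ideal.Quotient.field (Ideal.span {p})
  have hk := hdim p hp.prime
  rw [span_range_one_tmul, span_range_one_tmul, ← hWspan] at hk
  exact (snf.finrank_baseChange_eq_iff _).1 (hk.trans hK) i
    (Ideal.Quotient.eq_zero_iff_mem.2 (Ideal.mem_span_singleton.2 hpa))

/-- Lemma `R-mod` (Premet–Topley): over a PID `R`, if `W ⊆ V` is a nonzero submodule of a
free module of rank `n`, generated by `w₁, …, w_m`, and for every prime `p` of `R` the span of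
the images of the `wᵢ` in `(R/pR) ⊗ V ≅ V/pV` has dimension equal to the dimension of the
`Frac(R)`-span of `W` in `Frac(R) ⊗ V`, then `W` is a direct summand of `V`. -/
theorem stmt0 {R : Type*} [CommRing R] [IsDomain R] [IsPrincipalIdealRing R]
    {V : Type*} [AddCommGroup V] [Module R V] [Module.Free R V] [Module.Finite R V]
    (n : ℕ) (hrank : Module.finrank R V = n)
    {m : ℕ} (w : Fin m → V)
    (W : Submodule R V) (hWspan : W = Submodule.span R (Set.range w)) (hW0 : W ≠ ⊥)
    (hdim : ∀ p : R, Prime p →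
      Module.finrank (R ⧸ Ideal.span {p})
        (Submodule.span (R ⧸ Ideal.span {p})
          (Set.range fun i => ((1 : R ⧸ Ideal.span {p}) ⊗ₜ[R] w i :
            (R ⧸ Ideal.span {p}) ⊗[R] V)))
      = Module.finrank (FractionRing R)
        (Submodule.span (FractionRing R)
          (Set.range fun i => ((1 : FractionRing R) ⊗ₜ[R] w i :
            (FractionRing R) ⊗[R] V)))) :
    ∃ U : Submodule R V, IsCompl W U :=
  stmt0_general w W hWspan hdim
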